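/- For all natural numbers i ≤ j, the integral ∫_{−1}^{1} (t + 1) ψ_i(t) ψ_j(t) dt equals: 4(i + 1)/((2i + 1)(2i + 3)) if j = i; 4/((2i + 1)(2i + 3)(2i + 5)) if j = i + 1; −2(i + 2)/((2i + 3)(2i + 5)) if j = i + 2; and 0 if j ≥ i + 3. -/

import Mathlib

open Polynomial MeasureTheory

noncomputable section

/-- The Legendre polynomial `L_n`, given by the Rodrigues formula
`L_n(t) = (1/(2^n n!)) (d/dt)^n [(t² − 1)^n]`. -/
noncomputable def legendreP (n : ℕ) : Polynomial ℝ :=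
  ((2 ^ n * n.factorial : ℝ))⁻¹ • (Polynomial.derivative^[n] ((X ^ 2 - 1) ^ n))

/-- `ψ_l(t) = L_l(t) − L_{l+1}(t)`. -/
noncomputable def psiP (l : ℕ) : Polynomial ℝ := legendreP l - legendreP (l + 1)

noncomputable def J (p : Polynomial ℝ) : ℝ := ∫ t in (-1:ℝ)..1, p.eval t

lemma J_intble (p : Polynomial ℝ) : IntervalIntegrable (fun t => p.eval t) volume (-1:ℝ) 1 :=
  (p.continuous_aeval).intervalIntegrable _ _

lemma J_add (p q : Polynomial ℝ) : J (p + q) = J p + J q := by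
  simp only [J, eval_add]
  exact intervalIntegral.integral_add (J_intble p) (J_intble q)

lemma J_sub (p q : Polynomial ℝ) : J (p - q) = J p - J q := by
  simp only [J, eval_sub]
  exact intervalIntegral.integral_sub (J_intble p) (J_intble q)

lemma J_smul (c : ℝ) (p : Polynomial ℝ) : J (c • p) = c * J p := by
  simp only [J, eval_smul, smul_eq_mul]
  exact intervalIntegral.integral_const_mul c _

lemma J_zero : J (0 : Polynomial ℝ) = 0 := by simp [J]

lemma J_deriv (p : Polynomial ℝ) : J (derivative p) = p.eval 1 - p.eval (-1) := by
  simp only [J]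
  exact intervalIntegral.integral_eq_sub_of_hasDerivAt (fun x _ => p.hasDerivAt x)
    ((derivative p).continuous_aeval.intervalIntegrable _ _)

lemma J_ibp (p q : Polynomial ℝ) :
    J (p * derivative q) = (p * q).eval 1 - (p * q).eval (-1) - J (derivative p * q) := by
  have h := J_deriv (p * q)
  rw [derivative_mul, J_add] at h
  linarith

lemma J_odd (p : Polynomial ℝ) (h : p.comp (-X) = -p) : J p = 0 := by
  have h1 : J p = ∫ t in (-1:ℝ)..1, p.eval (-t) := by
    rw [intervalIntegral.integral_comp_neg (fun t => p.eval t)]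
    simp [J]
  have h2 : ∀ t : ℝ, p.eval (-t) = -p.eval t := by
    intro t
    have := congrArg (fun q => Polynomial.eval t q) h
    simpa [eval_comp] using this
  rw [intervalIntegral.integral_congr (g := fun t => -p.eval t) (fun t _ => h2 t)] at h1
  rw [intervalIntegral.integral_neg] at h1
  have : J p = -J p := h1
  linarith
noncomputable section

lemma rod_dvd (n m : ℕ) (hm : m ≤ n) :
    ∃ r : Polynomial ℝ, derivative^[m] ((X ^ 2 - 1) ^ n) = (X ^ 2 - 1) ^ (n - m) * r := by
  induction m with
  | zero => exact ⟨1, by simp⟩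
  | succ m ih =>
    obtain ⟨r, hr⟩ := ih (le_of_lt (Nat.lt_of_succ_le hm))
    refine ⟨(((n - (m+1) : ℕ) : Polynomial ℝ) + 1) * (derivative (X^2 - 1) * r)
      + (X ^ 2 - 1) * derivative r, ?_⟩
    have h1 : n - m = (n - (m+1)) + 1 := by omega
    rw [Function.iterate_succ_apply', hr, derivative_mul, derivative_pow, h1]
    simp only [Nat.cast_add, Nat.cast_one, map_add, map_one, C_eq_natCast, Nat.add_sub_cancel]
    ring

lemma rod_eval_zero (n m : ℕ) (hm : m < n) (x : ℝ) (hx : x ^ 2 = 1) :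
    (derivative^[m] ((X ^ 2 - 1) ^ n : Polynomial ℝ)).eval x = 0 := by
  obtain ⟨r, hr⟩ := rod_dvd n m (le_of_lt hm)
  obtain ⟨k, hk⟩ : ∃ k, n - m = k + 1 := ⟨n - m - 1, by omega⟩
  rw [hr, hk, pow_succ]
  simp [hx]

lemma J_ibp_iter (n : ℕ) : ∀ m, m ≤ n → ∀ p : Polynomial ℝ,
    J (p * derivative^[m] ((X ^ 2 - 1) ^ n)) =
      (-1 : ℝ) ^ m * J (derivative^[m] p * (X ^ 2 - 1) ^ n) := by
  intro m
  induction m with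
  | zero => intro _ p; simp
  | succ m ih =>
    intro hm p
    have hb1 : (derivative^[m] ((X ^ 2 - 1) ^ n : Polynomial ℝ)).eval 1 = 0 :=
      rod_eval_zero n m (by omega) 1 (by norm_num)
    have hb2 : (derivative^[m] ((X ^ 2 - 1) ^ n : Polynomial ℝ)).eval (-1) = 0 :=
      rod_eval_zero n m (by omega) (-1) (by norm_num)
    rw [Function.iterate_succ_apply']
    rw [J_ibp p (derivative^[m] ((X ^ 2 - 1) ^ n))]
    rw [ih (by omega) (derivative p)]
    rw [← Function.iterate_succ_apply]
    simp only [eval_mul, hb1, hb2, mul_zero, zero_sub, sub_zero]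
    ring

lemma J_orth_aux (n : ℕ) (p : Polynomial ℝ) (hp : p.natDegree < n) :
    J (p * legendreP n) = 0 := by
  have h : p * legendreP n =
      ((2 ^ n * n.factorial : ℝ))⁻¹ • (p * derivative^[n] ((X ^ 2 - 1) ^ n)) := by
    rw [legendreP, mul_smul_comm]
  rw [h, J_smul, J_ibp_iter n n le_rfl p, Polynomial.iterate_derivative_eq_zero hp]
  simp [J_zero]

def cL (n : ℕ) : ℝ := ((2*n).descFactorial n : ℝ) / (2 ^ n * n.factorial)

lemma q_natDegree (n : ℕ) : (((X:Polynomial ℝ) ^ 2 - 1) ^ n).natDegree = 2 * n := by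
  have h : ((X:Polynomial ℝ) ^ 2 - 1).natDegree = 2 := by
    compute_degree!
  rw [natDegree_pow, h, mul_comm]

lemma q_coeff_top (n : ℕ) : (((X:Polynomial ℝ) ^ 2 - 1) ^ n).coeff (2*n) = 1 := by
  have h : ((X:Polynomial ℝ) ^ 2 - 1).Monic := by
    have := monic_X_pow_sub_C (1:ℝ) (n := 2) (by norm_num)
    simpa using this
  have := (h.pow n).leadingCoeff
  rwa [leadingCoeff, q_natDegree] at this

lemma rodpoly_coeff (n : ℕ) :
    (derivative^[n] (((X:Polynomial ℝ) ^ 2 - 1) ^ n)).coeff n = ((2*n).descFactorial n : ℝ) := by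
  rw [coeff_iterate_derivative]
  have h : n + n = 2 * n := by ring
  rw [h, q_coeff_top, nsmul_eq_mul, mul_one]

lemma rodpoly_natDegree_le (n : ℕ) :
    (derivative^[n] (((X:Polynomial ℝ) ^ 2 - 1) ^ n)).natDegree ≤ n := by
  have := Polynomial.natDegree_iterate_derivative (((X:Polynomial ℝ) ^ 2 - 1) ^ n) n
  rwa [q_natDegree, two_mul, Nat.add_sub_cancel] at this

lemma legendreP_natDegree_le (n : ℕ) : (legendreP n).natDegree ≤ n :=
  le_trans (natDegree_smul_le _ _) (rodpoly_natDegree_le n)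

lemma legendreP_coeff_top (n : ℕ) : (legendreP n).coeff n = cL n := by
  rw [legendreP, coeff_smul, rodpoly_coeff, smul_eq_mul, cL]
  field_simp

lemma cL_pos (n : ℕ) : 0 < cL n := by
  apply div_pos
  · have : (2*n).descFactorial n ≠ 0 := by
      rw [Ne, Nat.descFactorial_eq_zero_iff_lt]; omega
    exact_mod_cast Nat.pos_of_ne_zero this
  · positivity

lemma J_one_sub_sq (n : ℕ) :
    J (((1:Polynomial ℝ) - X ^ 2) ^ n) =
      2 ^ (2*n+1) * (n.factorial : ℝ)^2 / ((2*n+1).factorial) := by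
  induction n with
  | zero => simp [J]; norm_num
  | succ n ih =>
    have key : (2*(n:ℝ)+3) • (((1:Polynomial ℝ) - X ^ 2) ^ (n+1)) =
        derivative (X * ((1:Polynomial ℝ) - X ^ 2) ^ (n+1))
          + (2*(n:ℝ)+2) • (((1:Polynomial ℝ) - X ^ 2) ^ n) := by
      rw [derivative_mul, derivative_pow, derivative_X, derivative_sub, derivative_one,
        derivative_X_pow]
      simp only [smul_eq_C_mul]
      push_cast
      simp only [map_add, map_mul, map_ofNat, map_one, C_eq_natCast]
      ring
    have hJ := congrArg J key
    rw [J_smul, J_add, J_smul, J_deriv] at hJ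
    have hb : ∀ x : ℝ, x ^ 2 = 1 → (X * ((1:Polynomial ℝ) - X ^ 2) ^ (n+1)).eval x = 0 := by
      intro x hx
      have h0 : (1:ℝ) - x * x = 0 := by nlinarith
      simp [pow_succ, h0]
    rw [hb 1 (by norm_num), hb (-1) (by norm_num), ih] at hJ
    have h3 : (2*(n:ℝ)+3) ≠ 0 := by positivity
    have e : J (((1:Polynomial ℝ) - X ^ 2) ^ (n+1)) =
        (2*(n:ℝ)+2) / (2*(n:ℝ)+3) * (2 ^ (2*n+1) * (n.factorial : ℝ)^2 / ((2*n+1).factorial)) := by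
      field_simp at hJ ⊢
      linarith
    rw [e]
    have hf1 : ((2*(n+1)+1).factorial : ℝ)
        = (2*(n:ℝ)+3) * (2*(n:ℝ)+2) * ((2*n+1).factorial : ℝ) := by
      have : 2*(n+1)+1 = (2*n+1) + 1 + 1 := by ring
      rw [this, Nat.factorial_succ, Nat.factorial_succ]
      push_cast
      ring
    have hf2 : ((n+1).factorial : ℝ) = ((n:ℝ)+1) * (n.factorial : ℝ) := by
      rw [Nat.factorial_succ]; push_cast; ring
    have hfp : (0:ℝ) < ((2*n+1).factorial : ℝ) := by positivity
    rw [hf1, hf2]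
    have h2 : (2:ℝ) ^ (2*(n+1)+1) = 4 * 2 ^ (2*n+1) := by
      have : 2*(n+1)+1 = (2*n+1) + 2 := by ring
      rw [this, pow_add]; ring
    rw [h2]
    field_simp
    ring

lemma J_orth_aux' (n : ℕ) (p : Polynomial ℝ) (h1 : p.natDegree ≤ n) (h2 : p.coeff n = 0) :
    J (p * legendreP n) = 0 := by
  rcases eq_or_ne p 0 with h | h
  · rw [h, zero_mul, J_zero]
  · apply J_orth_aux
    rcases lt_or_eq_of_le h1 with h' | h'
    · exact h'
    · exfalso
      apply h
      apply leadingCoeff_eq_zero.mp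
      rw [leadingCoeff, h']
      exact h2

lemma descFact_cast (n : ℕ) :
    ((2*n).descFactorial n : ℝ) * (n.factorial : ℝ) = ((2*n).factorial : ℝ) := by
  have := Nat.factorial_mul_descFactorial (show n ≤ 2*n by omega)
  have h2 : 2*n - n = n := by omega
  rw [h2] at this
  exact_mod_cast by rw [mul_comm]; exact_mod_cast congrArg (Nat.cast (R := ℝ)) this

lemma J_Xpow_legendre (n : ℕ) :
    J (X ^ n * legendreP n) = 2 ^ (n+1) * (n.factorial : ℝ)^2 / ((2*n+1).factorial) := by
  have hL : X ^ n * legendreP n =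
      ((2 ^ n * n.factorial : ℝ))⁻¹ • (X ^ n * derivative^[n] ((X ^ 2 - 1) ^ n)) := by
    rw [legendreP, mul_smul_comm]
  rw [hL, J_smul, J_ibp_iter n n le_rfl, iterate_derivative_X_pow_eq_natCast_mul]
  have hd : ((Nat.descFactorial n n : Polynomial ℝ)) * X ^ (n - n) * ((X:Polynomial ℝ) ^ 2 - 1) ^ n
      = (n.factorial : ℝ) • (((X:Polynomial ℝ) ^ 2 - 1) ^ n) := by
    rw [Nat.sub_self, pow_zero, mul_one, Nat.descFactorial_self, smul_eq_C_mul, C_eq_natCast]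
  rw [hd, J_smul]
  have hq : (((X:Polynomial ℝ) ^ 2 - 1) ^ n) = (-1:ℝ)^n • (((1:Polynomial ℝ) - X ^ 2) ^ n) := by
    rw [← _root_.smul_pow]
    congr 1
    rw [neg_smul, one_smul]
    ring
  rw [hq, J_smul, J_one_sub_sq]
  have hfp : (0:ℝ) < ((2*n+1).factorial : ℝ) := by positivity
  have h2 : ((2:ℝ))^(2*n+1) = 2^n * 2^(n+1) := by rw [← pow_add]; congr 1; ring
  have hne : ((2:ℝ))^n * (n.factorial : ℝ) ≠ 0 := by positivity
  field_simp
  rw [h2]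
  ring_nf
  rw [pow_mul, ← pow_mul, mul_comm n 2, pow_mul]
  norm_num

lemma J_norm (n : ℕ) : J (legendreP n * legendreP n) = 2 / (2*(n:ℝ)+1) := by
  have e : legendreP n * legendreP n =
      (legendreP n - cL n • X ^ n) * legendreP n + cL n • (X ^ n * legendreP n) := by
    rw [smul_eq_C_mul, smul_eq_C_mul]; ring
  have h1 : (legendreP n - cL n • X ^ n).natDegree ≤ n := by
    refine le_trans (natDegree_sub_le _ _) (max_le (legendreP_natDegree_le n) ?_)
    exact le_trans (natDegree_smul_le _ _) (natDegree_X_pow_le n)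
  have h2 : (legendreP n - cL n • X ^ n).coeff n = 0 := by
    rw [coeff_sub, legendreP_coeff_top, coeff_smul, coeff_X_pow]
    simp
  rw [e, J_add, J_orth_aux' n _ h1 h2, J_smul, J_Xpow_legendre, zero_add]
  have hf : ((2*n+1).factorial : ℝ) = (2*(n:ℝ)+1) * ((2*n).factorial : ℝ) := by
    rw [Nat.factorial_succ]; push_cast; ring
  have hd := descFact_cast n
  rw [cL, hf]
  have p1 : (0:ℝ) < (2*(n:ℝ)+1) := by positivity
  have p2 : (0:ℝ) < ((2*n).factorial : ℝ) := by positivity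
  have p3 : (0:ℝ) < (n.factorial : ℝ) := by positivity
  have p4 : (0:ℝ) < (2:ℝ)^n := by positivity
  rw [pow_succ]
  field_simp
  linear_combination hd

lemma iterate_deriv_comp_neg (p : Polynomial ℝ) :
    ∀ n, (derivative^[n] p).comp (-X) = (-1:ℝ)^n • derivative^[n] (p.comp (-X)) := by
  intro n
  induction n generalizing p with
  | zero => simp
  | succ n ih =>
    rw [Function.iterate_succ_apply, Function.iterate_succ_apply]
    rw [ih (derivative p)]
    have h := derivative_comp p (-X)
    rw [derivative_neg, derivative_X] at h
    have h2 : derivative (p.comp (-X)) = -(derivative p).comp (-X) := by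
      rw [h]; ring
    rw [h2, iterate_derivative_neg, pow_succ, mul_smul, smul_neg]
    simp

lemma legendre_comp_neg (n : ℕ) :
    (legendreP n).comp (-X) = (-1:ℝ)^n • legendreP n := by
  rw [legendreP, smul_comp, iterate_deriv_comp_neg]
  have hq : (((X:Polynomial ℝ) ^ 2 - 1) ^ n).comp (-X) = ((X:Polynomial ℝ) ^ 2 - 1) ^ n := by
    simp [pow_comp, sub_comp, one_comp, X_comp, neg_sq]
  rw [hq, smul_comm]

lemma J_X_sq (n : ℕ) : J (X * legendreP n * legendreP n) = 0 := by
  apply J_odd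
  rw [mul_comp, mul_comp, X_comp, legendre_comp_neg, smul_eq_C_mul]
  have hc : C ((-1:ℝ)^n) * C ((-1:ℝ)^n) = 1 := by
    rw [← C_mul, ← mul_pow]
    norm_num
  calc -X * (C ((-1:ℝ)^n) * legendreP n) * (C ((-1:ℝ)^n) * legendreP n)
      = (C ((-1:ℝ)^n) * C ((-1:ℝ)^n)) * -(X * legendreP n * legendreP n) := by ring
    _ = -(X * legendreP n * legendreP n) := by rw [hc]; ring

lemma cL_eq (n : ℕ) : cL n = ((2*n).factorial : ℝ) / (2^n * (n.factorial:ℝ)^2) := by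
  rw [cL, div_eq_div_iff (by positivity) (by positivity)]
  linear_combination ((2:ℝ)^n * (n.factorial:ℝ)) * descFact_cast n

lemma cL_rec (n : ℕ) : cL (n+1) * ((n:ℝ)+1) = cL n * (2*(n:ℝ)+1) := by
  rw [cL_eq, cL_eq]
  have hf1 : ((2*(n+1)).factorial:ℝ) = (2*(n:ℝ)+2)*(2*(n:ℝ)+1)*((2*n).factorial:ℝ) := by
    have h : 2*(n+1) = (2*n+1)+1 := by ring
    rw [h, Nat.factorial_succ, Nat.factorial_succ]
    push_cast; ring
  have hf2 : ((n+1).factorial:ℝ) = ((n:ℝ)+1) * (n.factorial:ℝ) := by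
    rw [Nat.factorial_succ]; push_cast; ring
  rw [hf1, hf2, pow_succ]
  have p3 : (0:ℝ) < (n.factorial : ℝ) := by positivity
  have p4 : (0:ℝ) < (2:ℝ)^n := by positivity
  have p5 : (0:ℝ) < (n:ℝ)+1 := by positivity
  field_simp

lemma J_moment (n : ℕ) :
    J (X * legendreP n * legendreP (n+1)) = 2*((n:ℝ)+1)/((2*(n:ℝ)+1)*(2*(n:ℝ)+3)) := by
  set c : ℝ := ((n:ℝ)+1)/(2*(n:ℝ)+1) with hcdef
  have e : X * legendreP n * legendreP (n+1) =
      (X * legendreP n - c • legendreP (n+1)) * legendreP (n+1)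
        + c • (legendreP (n+1) * legendreP (n+1)) := by
    rw [smul_eq_C_mul, smul_eq_C_mul]; ring
  have h1 : (X * legendreP n - c • legendreP (n+1)).natDegree ≤ n+1 := by
    refine le_trans (natDegree_sub_le _ _) (max_le ?_ ?_)
    · refine le_trans (natDegree_mul_le) ?_
      have := legendreP_natDegree_le n
      have hx := natDegree_X_le (R := ℝ)
      omega
    · exact le_trans (natDegree_smul_le _ _) (legendreP_natDegree_le (n+1))
  have h2 : (X * legendreP n - c • legendreP (n+1)).coeff (n+1) = 0 := by
    rw [coeff_sub, coeff_X_mul, coeff_smul, legendreP_coeff_top, legendreP_coeff_top]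
    have hrec := cL_rec n
    have hne : (2*(n:ℝ)+1) ≠ 0 := by positivity
    have hc : c * cL (n+1) = cL n := by
      rw [hcdef]
      field_simp
      linarith [hrec]
    rw [smul_eq_mul, hc, sub_self]
  rw [e, J_add, J_orth_aux' (n+1) _ h1 h2, J_smul, J_norm, zero_add]
  have : ((n+1 : ℕ):ℝ) = (n:ℝ)+1 := by push_cast; ring
  rw [this, hcdef]
  have p1 : (0:ℝ) < (2*(n:ℝ)+1) := by positivity
  have p2 : (0:ℝ) < (2*((n:ℝ)+1)+1) := by positivity
  field_simp
  ring

lemma J_LL (i j : ℕ) (h : i < j) : J (legendreP i * legendreP j) = 0 :=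
  J_orth_aux j _ (lt_of_le_of_lt (legendreP_natDegree_le i) h)

lemma J_XLL (i j : ℕ) (h : i + 2 ≤ j) : J (X * legendreP i * legendreP j) = 0 := by
  apply J_orth_aux j
  have h1 : (X * legendreP i).natDegree ≤ 1 + i := by
    refine le_trans natDegree_mul_le ?_
    have := legendreP_natDegree_le i
    have hx := natDegree_X_le (R := ℝ)
    omega
  omega

lemma J_expand (i j : ℕ) : J ((X + 1) * psiP i * psiP j) =
    J (X * legendreP i * legendreP j) - J (X * legendreP i * legendreP (j+1))
      - J (X * legendreP (i+1) * legendreP j) + J (X * legendreP (i+1) * legendreP (j+1))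
      + J (legendreP i * legendreP j) - J (legendreP i * legendreP (j+1))
      - J (legendreP (i+1) * legendreP j) + J (legendreP (i+1) * legendreP (j+1)) := by
  have e : (X + 1) * psiP i * psiP j =
      X * legendreP i * legendreP j - X * legendreP i * legendreP (j+1)
      - X * legendreP (i+1) * legendreP j + X * legendreP (i+1) * legendreP (j+1)
      + legendreP i * legendreP j - legendreP i * legendreP (j+1)
      - legendreP (i+1) * legendreP j + legendreP (i+1) * legendreP (j+1) := by
    rw [psiP, psiP]; ring
  rw [e]
  rw [J_add, J_sub, J_sub, J_add, J_add, J_sub, J_sub]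


/-- For `i ≤ j`, `∫_{−1}^{1} (t+1) ψ_i(t) ψ_j(t) dt` equals
`4(i+1)/((2i+1)(2i+3))` if `j = i`; `4/((2i+1)(2i+3)(2i+5))` if `j = i+1`;
`−2(i+2)/((2i+3)(2i+5))` if `j = i+2`; and `0` if `j ≥ i+3`. -/
theorem integral_mass_psi (i j : ℕ) (hij : i ≤ j) :
    (j = i →
      ∫ t in (-1:ℝ)..1, (t + 1) * (psiP i).eval t * (psiP j).eval t
        = 4 * ((i : ℝ) + 1) / ((2 * (i : ℝ) + 1) * (2 * (i : ℝ) + 3))) ∧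
    (j = i + 1 →
      ∫ t in (-1:ℝ)..1, (t + 1) * (psiP i).eval t * (psiP j).eval t
        = 4 / ((2 * (i : ℝ) + 1) * (2 * (i : ℝ) + 3) * (2 * (i : ℝ) + 5))) ∧
    (j = i + 2 →
      ∫ t in (-1:ℝ)..1, (t + 1) * (psiP i).eval t * (psiP j).eval t
        = -(2 * ((i : ℝ) + 2)) / ((2 * (i : ℝ) + 3) * (2 * (i : ℝ) + 5))) ∧
    (i + 3 ≤ j →
      ∫ t in (-1:ℝ)..1, (t + 1) * (psiP i).eval t * (psiP j).eval t = 0) := by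
  have hint : (∫ t in (-1:ℝ)..1, (t + 1) * (psiP i).eval t * (psiP j).eval t)
      = J ((X + 1) * psiP i * psiP j) := by
    simp [J, eval_mul, eval_add]
  have p1 : (0:ℝ) < 2*(i:ℝ)+1 := by positivity
  have p3 : (0:ℝ) < 2*(i:ℝ)+3 := by positivity
  have p5 : (0:ℝ) < 2*(i:ℝ)+5 := by positivity
  refine ⟨?_, ?_, ?_, ?_⟩
  · rintro rfl
    rw [hint, J_expand]
    have c1 : X * legendreP (j+1) * legendreP j = X * legendreP j * legendreP (j+1) := by ring
    have c2 : legendreP (j+1) * legendreP j = legendreP j * legendreP (j+1) := by ring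
    rw [c1, c2, J_X_sq, J_X_sq, J_moment, J_LL j (j+1) (by omega), J_norm, J_norm]
    push_cast
    field_simp
    ring
  · rintro rfl
    rw [hint, J_expand]
    have c1 : X * legendreP (i+1) * legendreP (i+1+1) = X * legendreP (i+1) * legendreP (i+2) := by
      norm_num
    rw [J_moment, J_XLL i (i+1+1) (by omega), J_X_sq, c1]
    have c2 : (i:ℝ) + 1 + 1 = (i:ℝ) + 2 := by ring
    rw [show i+1+1 = i+2 from rfl] at *
    rw [J_moment, J_LL i (i+1) (by omega), J_LL i (i+2) (by omega), J_norm,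
      J_LL (i+1) (i+2) (by omega)]
    push_cast
    field_simp
    ring
  · rintro rfl
    rw [hint, J_expand]
    rw [J_XLL i (i+2) (by omega), J_XLL i (i+2+1) (by omega), J_XLL (i+1) (i+2+1) (by omega),
      show i+2 = (i+1)+1 from rfl, J_moment,
      J_LL i ((i+1)+1) (by omega), J_LL i ((i+1)+1+1) (by omega),
      J_LL (i+1) ((i+1)+1) (by omega), J_LL (i+1) ((i+1)+1+1) (by omega)]
    push_cast
    field_simp
    ring
  · intro h
    rw [hint, J_expand]
    rw [J_XLL i j (by omega), J_XLL i (j+1) (by omega), J_XLL (i+1) j (by omega),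
      J_XLL (i+1) (j+1) (by omega),
      J_LL i j (by omega), J_LL i (j+1) (by omega), J_LL (i+1) j (by omega),
      J_LL (i+1) (j+1) (by omega)]
    ring
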